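/- Let 𝒮 = {S_1,…,S_k} be a maximal nested collection with support S ⊆ [n]. Then for every nonempty subset I ⊆ S, the Laurent polynomial Y_I is a rational function with integer coefficients in the elements Y_{S_1},…,Y_{S_k}; that is, inside the field ℚ(A_1,…,A_n,X_1,…,X_n), Y_I lies in the fraction field of the subring ℤ[Y_{S_1},…,Y_{S_k}]. -/

import Mathlib

open MvPolynomial

/-- Reachability inside a subset `U` of vertices, along edges of `E`. -/
def ReachIn {n : ℕ} (E : Fin n → Fin n → Prop) (U : Finset (Fin n)) (a b : Fin n) : Prop :=
  Relation.ReflTransGen (fun x y => E x y ∧ x ∈ U ∧ y ∈ U) a b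

/-- A nonempty subset `I` is strongly connected if any vertex of `I` can reach any
other vertex of `I` by a directed path staying inside `I`. -/
def StronglyConnected {n : ℕ} (E : Fin n → Fin n → Prop) (I : Finset (Fin n)) : Prop :=
  I.Nonempty ∧ ∀ a ∈ I, ∀ b ∈ I, ReachIn E I a b

open Classical in
/-- The strongly connected component of `x` in the induced subgraph on `U`. -/
noncomputable def scc {n : ℕ} (E : Fin n → Fin n → Prop) (U : Finset (Fin n)) (x : Fin n) :
    Finset (Fin n) :=
  U.filter fun y => ReachIn E U x y ∧ ReachIn E U y x

/-- `S ⊕ j` : the strongly connected component of `S ∪ {j}` containing `j`. -/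
noncomputable def oplus {n : ℕ} (E : Fin n → Fin n → Prop) (S : Finset (Fin n)) (j : Fin n) :
    Finset (Fin n) :=
  scc E (insert j S) j

/-- `S ⊖ j = (S ∪ {j}) − (S ⊕ j)`. -/
noncomputable def ominus {n : ℕ} (E : Fin n → Fin n → Prop) (S : Finset (Fin n)) (j : Fin n) :
    Finset (Fin n) :=
  insert j S \ oplus E S j

/-- A family of strongly connected subsets is nested if any two members are nested or
disjoint, and any tuple of pairwise disjoint members are exactly the strongly connected
components of their union. -/
def Nested {n : ℕ} (E : Fin n → Fin n → Prop) (𝒮 : Finset (Finset (Fin n))) : Prop :=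
  (∀ I ∈ 𝒮, StronglyConnected E I) ∧
  (∀ I ∈ 𝒮, ∀ J ∈ 𝒮, I ⊆ J ∨ J ⊆ I ∨ Disjoint I J) ∧
  (∀ 𝒯 ⊆ 𝒮, (∀ I ∈ 𝒯, ∀ J ∈ 𝒯, I ≠ J → Disjoint I J) →
    ∀ I ∈ 𝒯, ∀ x ∈ I, scc E (𝒯.sup id) x = I)

/-- The support of a collection: the union of its members. -/
def nsupport {n : ℕ} (𝒮 : Finset (Finset (Fin n))) : Finset (Fin n) := 𝒮.sup id

/-- A nested collection is maximal (for its support) if the only nested collection with the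
same support containing it is itself. -/
def MaximalNested {n : ℕ} (E : Fin n → Fin n → Prop) (𝒮 : Finset (Finset (Fin n))) : Prop :=
  Nested E 𝒮 ∧ ∀ 𝒮' : Finset (Finset (Fin n)),
    Nested E 𝒮' → nsupport 𝒮' = nsupport 𝒮 → 𝒮 ⊆ 𝒮' → 𝒮' = 𝒮

/-- The ambient field: rational functions in the indeterminates `A_1,…,A_n,X_1,…,X_n`. -/
abbrev Kn (n : ℕ) : Type := FractionRing (MvPolynomial (Fin n ⊕ Fin n) ℤ)

/-- The coefficient `A_i`, as an element of the ambient field. -/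
noncomputable def AA {n : ℕ} (i : Fin n) : Kn n :=
  algebraMap (MvPolynomial (Fin n ⊕ Fin n) ℤ) (Kn n) (X (Sum.inl i))

/-- The initial cluster variable `X_i`, as an element of the ambient field. -/
noncomputable def XX {n : ℕ} (i : Fin n) : Kn n :=
  algebraMap (MvPolynomial (Fin n ⊕ Fin n) ℤ) (Kn n) (X (Sum.inr i))

/-- `f` is acyclic on `I`: the only directed cycles in the graph `{i → f(i) : i ∈ I}`
are loops at fixed points. -/
def IsAcyclicOn {n : ℕ} (I : Finset (Fin n)) (f : Fin n → Fin n) : Prop :=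
  ∀ i ∈ I, ∀ k : ℕ, 0 < k → (∀ r < k, f^[r] i ∈ I) → f^[k] i = i → f i = i

open Classical in
/-- The numerator `N_I` of `Y_I`: the generating function of acyclic functions `f : I → [n]`
(encoded as functions `Fin n → Fin n` fixing every vertex outside `I`), where a fixed point
`i ∈ I` contributes `A_i` and a non-fixed point contributes `X_{f i}`. -/
noncomputable def Ynum {n : ℕ} (E : Fin n → Fin n → Prop) (I : Finset (Fin n)) :
    MvPolynomial (Fin n ⊕ Fin n) ℤ :=
  ∑ f : Fin n → Fin n,
    if (∀ i, i ∉ I → f i = i) ∧ (∀ i ∈ I, f i = i ∨ E i (f i)) ∧ IsAcyclicOn I f then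
      ∏ i ∈ I, if f i = i then X (Sum.inl i) else X (Sum.inr (f i))
    else 0

/-- The Laurent polynomial `Y_I` (with `Y_∅ = 1`). -/
noncomputable def YY {n : ℕ} (E : Fin n → Fin n → Prop) (I : Finset (Fin n)) : Kn n :=
  algebraMap (MvPolynomial (Fin n ⊕ Fin n) ℤ) (Kn n) (Ynum E I) / ∏ i ∈ I, XX i

open Classical in
/-- `P_S^{i,j}`: the sum of `Y_{S − p}` over all simple paths `p : i →_S j` in the graph,
whose intermediate vertices lie in `S`.  A path with `m` edges is encoded as an injective
map `v : Fin (m+1) → Fin n` whose consecutive values are edges. -/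
noncomputable def PP {n : ℕ} (E : Fin n → Fin n → Prop) (S : Finset (Fin n)) (i j : Fin n) :
    Kn n :=
  ∑ m ∈ Finset.range (n + 1), ∑ v : Fin (m + 1) → Fin n,
    if Function.Injective v ∧ v 0 = i ∧ v (Fin.last m) = j ∧
        (∀ r : Fin m, E (v r.castSucc) (v r.succ)) ∧
        (∀ r : Fin (m + 1), r ≠ 0 → r ≠ Fin.last m → v r ∈ S) then
      YY E (S \ Finset.image v Finset.univ)
    else 0

open Classical in
/-- The matrix `𝒴`, with diagonal entries `Y_{{i}}`, entries `−1` at edges of the graph,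
and `0` elsewhere. -/
noncomputable def Ymat {n : ℕ} (E : Fin n → Fin n → Prop) : Matrix (Fin n) (Fin n) (Kn n) :=
  Matrix.of fun i j => if i = j then YY E {i} else if E i j then -1 else 0

/-!
Every member `T` of a maximal nested collection `𝒮` has a pivot `j ∈ T` such that every other
vertex of `T` lies in a smaller member of `𝒮`: if `j` and `u` were two vertices of `T` in no
smaller member, the strongly connected component of `u` in `T - j` could be added to `𝒮`.

Expanding `Y_j · Y_{I-j}` over pairs of functions and separating the glued functions that close
a cycle through `j` gives the exchange relation `Y_j Y_{I-j} = Y_I + ∑_γ Y_{I-γ}`, summed over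
the simple cycles `γ` through `j` inside `I`. By induction on `I` this makes every `Y_I` a
polynomial in the `Y_{i}`, `i ∈ I`. By induction on `T ∈ 𝒮`, the relation at the pivot,
`Y_j = (Y_T + ∑_γ Y_{T-γ}) / Y_{T-j}`, makes each `Y_{i}`, `i ∈ T`, a rational function of `Y_T`
and of the `Y_{i'}` for `i'` in smaller members.
-/

section StronglyConnectedComponents

variable {n : ℕ} {E : Fin n → Fin n → Prop} {U V M : Finset (Fin n)} {x y : Fin n}

lemma ReachIn.mono (hUV : U ⊆ V) (h : ReachIn E U x y) : ReachIn E V x y :=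
  Relation.ReflTransGen.mono (fun _ _ h => ⟨h.1, hUV h.2.1, hUV h.2.2⟩) _ _ h

lemma ReachIn.mem_right (h : ReachIn E U x y) (hx : x ∈ U) : y ∈ U := by
  induction h with
  | refl => exact hx
  | tail _ hcd => exact hcd.2.2

lemma mem_scc : y ∈ scc E U x ↔ y ∈ U ∧ ReachIn E U x y ∧ ReachIn E U y x := by
  classical
  simp [scc]

lemma scc_subset : scc E U x ⊆ U := fun _ hy => (mem_scc.1 hy).1

lemma mem_scc_self (hx : x ∈ U) : x ∈ scc E U x :=
  mem_scc.2 ⟨hx, .refl, .refl⟩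

lemma scc_mono (hUV : U ⊆ V) : scc E U x ⊆ scc E V x := fun _ hy =>
  let ⟨hyU, hxy, hyx⟩ := mem_scc.1 hy
  mem_scc.2 ⟨hUV hyU, hxy.mono hUV, hyx.mono hUV⟩

lemma scc_eq_of_mem (hy : y ∈ scc E U x) : scc E U y = scc E U x := by
  obtain ⟨-, hxy, hyx⟩ := mem_scc.1 hy
  ext z
  simp only [mem_scc]
  exact ⟨fun ⟨hz, h₁, h₂⟩ => ⟨hz, hxy.trans h₁, h₂.trans hyx⟩,
    fun ⟨hz, h₁, h₂⟩ => ⟨hz, hyx.trans h₁, h₂.trans hxy⟩⟩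

lemma ReachIn.scc_of_reachIn {a b : Fin n} (hab : ReachIn E U a b) (hbx : ReachIn E U b x)
    (hxa : ReachIn E U x a) : ReachIn E (scc E U x) a b := by
  induction hab with
  | refl => exact .refl
  | @tail c d hac hcd ih =>
    have hcx : ReachIn E U c x := .head hcd hbx
    have hxc : ReachIn E U x c := hxa.trans hac
    exact (ih hcx).tail ⟨hcd.1, mem_scc.2 ⟨hcd.2.1, hxc, hcx⟩,
      mem_scc.2 ⟨hcd.2.2, hxc.tail hcd, hbx⟩⟩

lemma reachIn_scc {a b : Fin n} (ha : a ∈ scc E U x) (hb : b ∈ scc E U x) :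
    ReachIn E (scc E U x) a b :=
  let ⟨_, hxa, hax⟩ := mem_scc.1 ha
  let ⟨_, hxb, hbx⟩ := mem_scc.1 hb
  ReachIn.scc_of_reachIn (hax.trans hxb) hbx hxa

lemma stronglyConnected_scc (hx : x ∈ U) : StronglyConnected E (scc E U x) :=
  ⟨⟨x, mem_scc_self hx⟩, fun _ ha _ hb => reachIn_scc ha hb⟩

lemma scc_subset_scc_of_subset (h : scc E U x ⊆ V) : scc E U x ⊆ scc E V x := by
  intro y hy
  obtain ⟨hyU, -, hyx⟩ := mem_scc.1 hy
  have hx : x ∈ scc E U x := mem_scc_self (hyx.mem_right hyU)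
  exact mem_scc.2 ⟨h hy, (reachIn_scc hx hy).mono h, (reachIn_scc hy hx).mono h⟩

lemma StronglyConnected.subset_scc (hM : StronglyConnected E M) (hMU : M ⊆ U) (hxM : x ∈ M)
    (hx : x ∈ scc E U y) : M ⊆ scc E U y := by
  rw [← scc_eq_of_mem hx]
  exact fun m hm => mem_scc.2 ⟨hMU hm, (hM.2 x hxM m hm).mono hMU, (hM.2 m hm x hxM).mono hMU⟩

lemma StronglyConnected.scc_eq (hM : StronglyConnected E M) (hMU : M ⊆ U) (hxM : x ∈ M)
    (h : scc E U x ⊆ M) : scc E U x = M :=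
  h.antisymm (hM.subset_scc hMU hxM (mem_scc_self (hMU hxM)))

lemma StronglyConnected.subset_or_disjoint_scc (hM : StronglyConnected E M) (hMU : M ⊆ U) :
    M ⊆ scc E U x ∨ Disjoint M (scc E U x) := by
  rw [or_iff_not_imp_right, Finset.not_disjoint_iff]
  rintro ⟨y, hyM, hy⟩
  exact hM.subset_scc hMU hyM hy

end StronglyConnectedComponents

section MaximalNested

open Finset

variable {n : ℕ} {E : Fin n → Fin n → Prop} {𝒮 : Finset (Finset (Fin n))}
  {T : Finset (Fin n)} {j u : Fin n}

section

variable (h𝒮 : Nested E 𝒮) (hT : T ∈ 𝒮) (hj : ∀ M ∈ 𝒮, M ⊂ T → j ∉ M)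
include h𝒮 hT hj

lemma Nested.subset_or_subset_erase_or_disjoint {M : Finset (Fin n)} (hM : M ∈ 𝒮) :
    T ⊆ M ∨ M ⊆ T.erase j ∨ Disjoint M T := by
  rcases h𝒮.2.1 M hM T hT with hMT | hTM | hd
  · rcases hMT.eq_or_ssubset with rfl | hMT'
    · exact .inl subset_rfl
    · exact .inr <| .inl fun i hi => mem_erase.2 ⟨fun h => hj M hM hMT' (h ▸ hi), hMT hi⟩
  · exact .inl hTM
  · exact .inr <| .inr hd

lemma Nested.scc_erase_subset_or_subset_or_disjoint {M : Finset (Fin n)} (hM : M ∈ 𝒮) :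
    scc E (T.erase j) u ⊆ M ∨ M ⊆ scc E (T.erase j) u ∨ Disjoint (scc E (T.erase j) u) M := by
  rcases h𝒮.subset_or_subset_erase_or_disjoint hT hj hM with hTM | hMT | hd
  · exact .inl (scc_subset.trans ((erase_subset j T).trans hTM))
  · exact .inr (((h𝒮.1 M hM).subset_or_disjoint_scc hMT).imp_right fun h => h.symm)
  · exact .inr <| .inr (hd.symm.mono_left (scc_subset.trans (erase_subset j T)))

variable (hu : u ∈ T.erase j)
include hu

lemma Nested.subset_erase_or_disjoint_of_disjoint_scc {M : Finset (Fin n)} (hM : M ∈ 𝒮)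
    (hMC : Disjoint M (scc E (T.erase j) u)) : M ⊆ T.erase j ∨ Disjoint M T := by
  have huC : u ∈ scc E (T.erase j) u := mem_scc_self hu
  exact (h𝒮.subset_or_subset_erase_or_disjoint hT hj hM).resolve_left fun hTM =>
    disjoint_left.1 hMC (hTM (mem_of_mem_erase (scc_subset huC))) huC

/-- `T` and the members of `𝒯` outside `T` form a disjoint family of `𝒮`, so `T` is a
component of their union, which contains the union of `𝒯`. -/
lemma Nested.scc_sup_subset_scc_erase {𝒯 : Finset (Finset (Fin n))}
    (h𝒯 : 𝒯 ⊆ insert (scc E (T.erase j) u) 𝒮)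
    (hdisj : ∀ I ∈ 𝒯, ∀ J ∈ 𝒯, I ≠ J → Disjoint I J) (hC : scc E (T.erase j) u ∈ 𝒯)
    {y : Fin n} (hy : y ∈ scc E (T.erase j) u) :
    scc E (𝒯.sup id) y ⊆ scc E (T.erase j) u := by
  set C := scc E (T.erase j) u
  have hclass : ∀ M ∈ 𝒯.erase C, M ⊆ T.erase j ∨ Disjoint M T := fun M hM =>
    h𝒮.subset_erase_or_disjoint_of_disjoint_scc hT hj hu (subset_insert_iff.1 h𝒯 hM)
      (hdisj M (mem_of_mem_erase hM) C hC (ne_of_mem_erase hM))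
  set 𝒯out := (𝒯.erase C).filter (Disjoint · T)
  set G := (insert T 𝒯out).sup id
  have hTG : T ⊆ G := le_sup (f := id) (mem_insert_self T _)
  have hG : scc E G y = T := by
    refine h𝒮.2.2 _ (insert_subset hT fun M hM => subset_insert_iff.1 h𝒯 (mem_filter.1 hM).1)
      ?_ T (mem_insert_self _ _) y (mem_of_mem_erase (scc_subset hy))
    intro I hI J hJ hIJ
    rcases mem_insert.1 hI with rfl | hI <;> rcases mem_insert.1 hJ with rfl | hJ
    · exact absurd rfl hIJ
    · exact (mem_filter.1 hJ).2.symm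
    · exact (mem_filter.1 hI).2
    · exact hdisj I (mem_of_mem_erase (mem_filter.1 hI).1) J
        (mem_of_mem_erase (mem_filter.1 hJ).1) hIJ
  have hVG : 𝒯.sup id ⊆ G := by
    refine Finset.sup_le fun M hM => ?_
    by_cases hMC : M = C
    · exact hMC ▸ (scc_subset.trans (erase_subset j T)).trans hTG
    rcases hclass M (mem_erase.2 ⟨hMC, hM⟩) with hMT | hMT
    · exact (hMT.trans (erase_subset j T)).trans hTG
    · exact le_sup (f := id) (mem_insert_of_mem (mem_filter.2 ⟨mem_erase.2 ⟨hMC, hM⟩, hMT⟩))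
  have hVT : 𝒯.sup id ∩ T ⊆ T.erase j := by
    intro v hv
    obtain ⟨M, hM, hvM⟩ := mem_sup.1 (mem_inter.1 hv).1
    by_cases hMC : M = C
    · exact scc_subset (hMC ▸ hvM)
    rcases hclass M (mem_erase.2 ⟨hMC, hM⟩) with hMT | hMT
    · exact hMT hvM
    · exact absurd (mem_inter.1 hv).2 (disjoint_left.1 hMT hvM)
  have : scc E (𝒯.sup id) y ⊆ T.erase j := fun v hv =>
    hVT (mem_inter.2 ⟨scc_subset hv, hG ▸ scc_mono hVG hv⟩)
  exact (scc_subset_scc_of_subset this).trans (scc_eq_of_mem hy).le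

lemma Nested.scc_sup_eq_of_scc_erase_mem {𝒯 : Finset (Finset (Fin n))}
    (h𝒯 : 𝒯 ⊆ insert (scc E (T.erase j) u) 𝒮)
    (hdisj : ∀ I ∈ 𝒯, ∀ J ∈ 𝒯, I ≠ J → Disjoint I J) (hC : scc E (T.erase j) u ∈ 𝒯)
    {I₀ : Finset (Fin n)} (hI₀ : I₀ ∈ 𝒯) {x : Fin n} (hx : x ∈ I₀) :
    scc E (𝒯.sup id) x = I₀ := by
  set C := scc E (T.erase j) u
  have hsccC := fun y (hy : y ∈ C) => h𝒮.scc_sup_subset_scc_erase hT hj hu h𝒯 hdisj hC hy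
  have hI₀SC : StronglyConnected E I₀ := by
    rcases mem_insert.1 (h𝒯 hI₀) with rfl | h
    exacts [stronglyConnected_scc hu, h𝒮.1 I₀ h]
  refine hI₀SC.scc_eq (le_sup (f := id) hI₀) hx ?_
  by_cases hI₀C : I₀ = C
  · exact hI₀C ▸ hsccC x (hI₀C ▸ hx)
  -- otherwise the component of `x` avoids `C`, so it lies in the union of `𝒯 - C`
  have hsub : scc E (𝒯.sup id) x ⊆ (𝒯.erase C).sup id := by
    intro v hv
    obtain ⟨M, hM, hvM⟩ := mem_sup.1 (scc_subset hv)
    by_cases hMC : M = C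
    · have hxv : x ∈ scc E (𝒯.sup id) v :=
        scc_eq_of_mem hv ▸ mem_scc_self (le_sup (f := id) hI₀ hx)
      exact absurd (hsccC v (hMC ▸ hvM) hxv) (disjoint_left.1 (hdisj I₀ hI₀ C hC hI₀C) hx)
    · exact mem_sup.2 ⟨M, mem_erase.2 ⟨hMC, hM⟩, hvM⟩
  calc scc E (𝒯.sup id) x ⊆ scc E ((𝒯.erase C).sup id) x := scc_subset_scc_of_subset hsub
    _ = I₀ := h𝒮.2.2 _ (subset_insert_iff.1 h𝒯)
        (fun I hI J hJ => hdisj I (mem_of_mem_erase hI) J (mem_of_mem_erase hJ)) I₀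
        (mem_erase.2 ⟨hI₀C, hI₀⟩) x hx

lemma Nested.insert_scc_erase : Nested E (insert (scc E (T.erase j) u) 𝒮) := by
  refine ⟨?_, ?_, fun 𝒯 h𝒯 hdisj => ?_⟩
  · simpa only [forall_mem_insert] using ⟨stronglyConnected_scc hu, h𝒮.1⟩
  · have hC : ∀ M ∈ 𝒮, _ := fun M hM => h𝒮.scc_erase_subset_or_subset_or_disjoint (u := u) hT hj hM
    simp only [forall_mem_insert]
    refine ⟨⟨.inl subset_rfl, hC⟩, fun M hM => ⟨?_, h𝒮.2.1 M hM⟩⟩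
    rcases hC M hM with h | h | h
    exacts [.inr (.inl h), .inl h, .inr (.inr h.symm)]
  · by_cases hC : scc E (T.erase j) u ∈ 𝒯
    · exact fun I₀ hI₀ x hx => h𝒮.scc_sup_eq_of_scc_erase_mem hT hj hu h𝒯 hdisj hC hI₀ hx
    · exact h𝒮.2.2 𝒯 ((subset_insert_iff_of_notMem hC).1 h𝒯) hdisj

end

lemma MaximalNested.eq_of_forall_ssubset_notMem (h𝒮 : MaximalNested E 𝒮) (hT : T ∈ 𝒮)
    (hjT : j ∈ T) (huT : u ∈ T) (hj : ∀ M ∈ 𝒮, M ⊂ T → j ∉ M) (hu : ∀ M ∈ 𝒮, M ⊂ T → u ∉ M) :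
    u = j := by
  -- otherwise the component of `u` in `T - j` could be added to `𝒮`
  by_contra huj
  have hu' : u ∈ T.erase j := mem_erase.2 ⟨huj, huT⟩
  have hCT : scc E (T.erase j) u ⊆ T := scc_subset.trans (erase_subset j T)
  have hsupp : nsupport (insert (scc E (T.erase j) u) 𝒮) = nsupport 𝒮 := by
    rw [nsupport, nsupport, sup_insert, sup_eq_right]
    exact hCT.trans (le_sup (f := id) hT)
  have hC : scc E (T.erase j) u ∈ 𝒮 :=
    h𝒮.2 _ (h𝒮.1.insert_scc_erase hT hj hu') hsupp (subset_insert _ _) ▸ mem_insert_self _ _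
  exact hu _ hC (scc_subset.trans_ssubset (erase_ssubset hjT)) (mem_scc_self hu')

lemma MaximalNested.exists_pivot (h𝒮 : MaximalNested E 𝒮) (hT : T ∈ 𝒮) :
    ∃ j ∈ T, ∀ i ∈ T, i ≠ j → ∃ M ∈ 𝒮, M ⊂ T ∧ i ∈ M := by
  by_cases h : ∃ j ∈ T, ∀ M ∈ 𝒮, M ⊂ T → j ∉ M
  · obtain ⟨j, hjT, hj⟩ := h
    refine ⟨j, hjT, fun i hiT hij => ?_⟩
    by_contra! hi
    exact hij (h𝒮.eq_of_forall_ssubset_notMem hT hjT hiT hj hi)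
  · push Not at h
    obtain ⟨j, hjT⟩ := (h𝒮.1.1 T hT).1
    exact ⟨j, hjT, fun i hiT _ => h i hiT⟩

end MaximalNested

section Iterates

open Function

variable {α : Type*} {f g : α → α} {x : α} {k : ℕ}

lemma iterate_eq_of_eqOn {s : Set α} (hfg : Set.EqOn f g s) (hk : ∀ r < k, f^[r] x ∈ s) :
    f^[k] x = g^[k] x := by
  induction k with
  | zero => rfl
  | succ k ih =>
    rw [iterate_succ_apply', iterate_succ_apply', ← ih fun r hr => hk r (by omega),
      hfg (hk k (by omega))]

/-- The period comes back to the start, so a fixed point on the orbit is `x` itself. -/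
lemma apply_iterate_ne_of_periodic (hk : 0 < k) (hper : f^[k] x = x) (hx : f x ≠ x) (r : ℕ) :
    f (f^[r] x) ≠ f^[r] x := by
  intro hfix
  have hle : r ≤ k * r := Nat.le_mul_of_pos_left r hk
  have : f^[k * r] x = f^[r] x := by
    rw [← Nat.sub_add_cancel hle, iterate_add_apply, iterate_fixed hfix]
  rw [(IsPeriodicPt.mul_const hper r).eq] at this
  exact hx (this ▸ hfix)

lemma exists_iterate_eq_of_periodic (hk : 0 < k) (hper : f^[k] x = x) (r : ℕ) :
    ∃ s, f^[s] (f^[r] x) = x :=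
  ⟨k * r - r, by rw [← iterate_add_apply, Nat.sub_add_cancel (Nat.le_mul_of_pos_left r hk),
    (IsPeriodicPt.mul_const hper r).eq]⟩

end Iterates

lemma Finset.piecewise_eqOn {ι β : Type*} (s : Finset ι) [∀ i, Decidable (i ∈ s)] (f g : ι → β) :
    Set.EqOn (s.piecewise f g) f s := fun _ hi => piecewise_eq_of_mem _ _ _ hi

section AcyclicFunctions

open Finset Function

variable {n : ℕ} {E : Fin n → Fin n → Prop} {I J : Finset (Fin n)} {f g : Fin n → Fin n}
  {j : Fin n}

lemma IsAcyclicOn.congr (hf : IsAcyclicOn I f) (hfg : Set.EqOn f g I) : IsAcyclicOn I g := by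
  intro i hi k hk hwin hper
  have hiter : ∀ r ≤ k, g^[r] i = f^[r] i := fun r hr =>
    iterate_eq_of_eqOn hfg.symm fun s hs => hwin s (by omega)
  rw [← hfg hi]
  exact hf i hi k hk (fun r hr => hiter r hr.le ▸ hwin r hr) (hiter k le_rfl ▸ hper)

lemma IsAcyclicOn.mono (hf : IsAcyclicOn I f) (hJI : J ⊆ I) : IsAcyclicOn J f :=
  fun i hi k hk hwin hper => hf i (hJI hi) k hk (fun r hr => hJI (hwin r hr)) hper

lemma isAcyclicOn_singleton : IsAcyclicOn {j} f := by
  intro i hi k hk hwin hper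
  obtain rfl := mem_singleton.1 hi
  rcases Nat.lt_or_ge 1 k with h1 | h1
  · exact mem_singleton.1 (hwin 1 h1)
  · obtain rfl : k = 1 := by omega
    exact hper

lemma isAcyclicOn_id : IsAcyclicOn I id := fun _ _ _ _ _ _ => rfl

variable (E) in
def IsAdmissible (I : Finset (Fin n)) (f : Fin n → Fin n) : Prop :=
  (∀ i, i ∉ I → f i = i) ∧ ∀ i ∈ I, f i = i ∨ E i (f i)

lemma isAdmissible_id : IsAdmissible E I id := ⟨fun _ _ => rfl, fun _ _ => .inl rfl⟩

lemma IsAdmissible.update_singleton {f₁ f₂ : Fin n → Fin n} (h₁ : IsAdmissible E {j} f₁)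
    (h₂ : IsAdmissible E (I.erase j) f₂) (hj : j ∈ I) :
    IsAdmissible E I (update f₂ j (f₁ j)) := by
  unfold IsAdmissible at *
  grind [update]

lemma IsAdmissible.update_id (hf : IsAdmissible E I f) (hj : j ∈ I) :
    IsAdmissible E {j} (update id j (f j)) := by
  unfold IsAdmissible at *
  grind [update]

lemma IsAdmissible.update_self (hf : IsAdmissible E I f) :
    IsAdmissible E (I.erase j) (update f j j) := by
  unfold IsAdmissible at *
  grind [update]

noncomputable def weight (I : Finset (Fin n)) (f : Fin n → Fin n) :
    MvPolynomial (Fin n ⊕ Fin n) ℤ :=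
  ∏ i ∈ I, if f i = i then X (Sum.inl i) else X (Sum.inr (f i))

lemma weight_congr (hfg : Set.EqOn f g I) : weight I f = weight I g :=
  prod_congr rfl fun i hi => by rw [hfg hi]

lemma weight_eq_mul_sdiff (hJI : J ⊆ I) (f : Fin n → Fin n) :
    weight I f = weight J f * weight (I \ J) f :=
  (prod_sdiff hJI).symm.trans (mul_comm _ _)

open Classical in
lemma Ynum_eq_sum :
    Ynum E I = ∑ f ∈ univ.filter (fun f => IsAdmissible E I f ∧ IsAcyclicOn I f), weight I f := by
  rw [sum_filter]
  simp only [Ynum, weight, IsAdmissible, and_assoc]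

open Classical in
lemma Ynum_singleton : Ynum E {j} = ∑ f ∈ univ.filter (IsAdmissible E {j}), weight {j} f := by
  simp only [Ynum_eq_sum, isAcyclicOn_singleton, and_true]

open Classical in
lemma Ynum_singleton_mul_Ynum_erase (hj : j ∈ I) :
    Ynum E {j} * Ynum E (I.erase j) =
      ∑ f ∈ univ.filter (fun f => IsAdmissible E I f ∧ IsAcyclicOn (I.erase j) f), weight I f := by
  rw [Ynum_singleton, Ynum_eq_sum, sum_mul_sum, ← sum_product']
  have hglue : ∀ (a : Fin n) (f : Fin n → Fin n), Set.EqOn (update f j a) f ↑(I.erase j) :=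
    fun a f i hi => update_of_ne (ne_of_mem_erase hi) _ _
  refine sum_nbij' (fun p => update p.2 j (p.1 j)) (fun f => (update id j (f j), update f j j))
    ?_ ?_ ?_ ?_ ?_ <;> simp only [mem_product, mem_filter, mem_univ, true_and]
  · rintro ⟨f₁, f₂⟩ ⟨h₁, h₂, hac⟩
    exact ⟨h₁.update_singleton h₂ hj, hac.congr (hglue _ f₂).symm⟩
  · rintro f ⟨hf, hac⟩
    exact ⟨hf.update_id hj, hf.update_self, hac.congr fun i hi => (hglue j f hi).symm⟩
  · rintro ⟨f₁, f₂⟩ ⟨h₁, h₂, -⟩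
    dsimp only at h₁ h₂
    simp only [update_self, update_idem, Prod.mk.injEq]
    constructor <;> funext i <;> by_cases hi : i = j
    · simp [hi]
    · simpa [hi] using (h₁.1 i (by simpa using hi)).symm
    · simpa [hi] using (h₂.1 j (notMem_erase j I)).symm
    · simp [hi]
  · intro f _
    simp
  · rintro ⟨f₁, f₂⟩ -
    rw [weight_eq_mul_sdiff (singleton_subset_iff.2 hj), sdiff_singleton_eq_erase,
      weight_congr (hglue _ f₂)]
    congr 1
    exact weight_congr fun i hi => by simp [mem_singleton.1 hi]

end AcyclicFunctions

section Cycles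

open Finset Function

variable {n : ℕ} {E : Fin n → Fin n → Prop} {I : Finset (Fin n)} {f g h : Fin n → Fin n}
  {i j x : Fin n}

def movedPts (f : Fin n → Fin n) : Finset (Fin n) := univ.filter fun i => f i ≠ i

open Classical in
noncomputable def orbitPts (f : Fin n → Fin n) (x : Fin n) : Finset (Fin n) :=
  univ.filter fun y => ∃ r, f^[r] x = y

lemma mem_movedPts : i ∈ movedPts f ↔ f i ≠ i := by simp [movedPts]

lemma mem_orbitPts {y : Fin n} : y ∈ orbitPts f x ↔ ∃ r, f^[r] x = y := by simp [orbitPts]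

lemma iterate_mem_orbitPts (r : ℕ) : f^[r] x ∈ orbitPts f x := mem_orbitPts.2 ⟨r, rfl⟩

lemma mapsTo_orbitPts : Set.MapsTo f (orbitPts f x) (orbitPts f x) := fun y hy => by
  obtain ⟨r, rfl⟩ := mem_orbitPts.1 hy
  exact mem_orbitPts.2 ⟨r + 1, iterate_succ_apply' f r x⟩

lemma orbitPts_eq_of_eqOn (hfg : Set.EqOn f g (orbitPts f x)) : orbitPts f x = orbitPts g x := by
  have hiter (r : ℕ) : f^[r] x = g^[r] x := iterate_eq_of_eqOn hfg fun s _ => iterate_mem_orbitPts s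
  ext y
  simp only [mem_orbitPts, hiter]

variable (E I j) in
/-- `h` is a simple directed cycle of the graph through `j`, inside `I`, and fixes everything
else. -/
structure IsCycleThrough (h : Fin n → Fin n) : Prop where
  periodic : ∃ m, 0 < m ∧ h^[m] j = j
  movedPts_eq : movedPts h = orbitPts h j
  edge : ∀ i, h i ≠ i → E i (h i)
  movedPts_subset : movedPts h ⊆ I

namespace IsCycleThrough

variable (hc : IsCycleThrough E I j h)
include hc

lemma mem_movedPts_self : j ∈ movedPts h := hc.movedPts_eq ▸ iterate_mem_orbitPts 0

lemma mapsTo : Set.MapsTo h (movedPts h) (movedPts h) := hc.movedPts_eq ▸ mapsTo_orbitPts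

lemma iterate_mem_movedPts (r : ℕ) : h^[r] j ∈ movedPts h :=
  hc.movedPts_eq ▸ iterate_mem_orbitPts r

lemma exists_iterate_eq (hi : i ∈ movedPts h) : ∃ s, h^[s] i = j := by
  obtain ⟨m, hm, hper⟩ := hc.periodic
  obtain ⟨r, rfl⟩ := mem_orbitPts.1 (hc.movedPts_eq ▸ hi)
  exact exists_iterate_eq_of_periodic hm hper r

lemma prod_comp {M : Type*} [CommMonoid M] (φ : Fin n → M) :
    ∏ i ∈ movedPts h, φ (h i) = ∏ i ∈ movedPts h, φ i := by
  obtain ⟨m, hm, hper⟩ := hc.periodic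
  have hperiod : ∀ i ∈ movedPts h, h^[m] i = i := fun i hi => by
    obtain ⟨r, rfl⟩ := mem_orbitPts.1 (hc.movedPts_eq ▸ hi)
    rw [← iterate_add_apply, add_comm, iterate_add_apply, hper]
  refine prod_nbij' h (h^[m - 1]) (fun i hi => hc.mapsTo hi) (fun i hi => hc.mapsTo.iterate _ hi)
    (fun i hi => ?_) (fun i hi => ?_) fun _ _ => rfl
  · rw [← iterate_succ_apply, Nat.succ_eq_add_one, Nat.sub_add_cancel hm, hperiod i hi]
  · rw [← iterate_succ_apply' h, Nat.succ_eq_add_one, Nat.sub_add_cancel hm, hperiod i hi]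

end IsCycleThrough

end Cycles

section CycleDecomposition

open Finset Function

variable {n : ℕ} {E : Fin n → Fin n → Prop} {I : Finset (Fin n)} {f : Fin n → Fin n} {j : Fin n}

/-- A cycle of `f` inside `I` which is not inside `I - j` must pass through `j`. -/
lemma exists_periodic_of_not_isAcyclicOn (hacE : IsAcyclicOn (I.erase j) f)
    (hnac : ¬ IsAcyclicOn I f) :
    (∃ k, 0 < k ∧ f^[k] j = j) ∧ f j ≠ j ∧ orbitPts f j ⊆ I := by
  simp only [IsAcyclicOn, not_forall] at hnac
  obtain ⟨i₀, hi₀, k, hk, hwin, hper, hfi₀⟩ := hnac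
  obtain ⟨r₀, hr₀k, rfl⟩ : ∃ r₀ < k, f^[r₀] i₀ = j := by
    by_contra! hne
    exact hfi₀ (hacE i₀ (mem_erase.2 ⟨hne 0 hk, hi₀⟩) k hk
      (fun r hr => mem_erase.2 ⟨hne r hr, hwin r hr⟩) hper)
  refine ⟨⟨k, hk, ?_⟩, apply_iterate_ne_of_periodic hk hper hfi₀ r₀, fun y hy => ?_⟩
  · rw [← iterate_add_apply, add_comm, iterate_add_apply, hper]
  · obtain ⟨r, rfl⟩ := mem_orbitPts.1 hy
    rw [← iterate_add_apply, ← (IsPeriodicPt.iterate_mod_apply hper _)]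
    exact hwin _ (Nat.mod_lt _ hk)

lemma apply_ne_of_mem_orbitPts (hper : ∃ k, 0 < k ∧ f^[k] j = j) (hfj : f j ≠ j)
    {y : Fin n} (hy : y ∈ orbitPts f j) : f y ≠ y := by
  obtain ⟨k, hk, hk'⟩ := hper
  obtain ⟨r, rfl⟩ := mem_orbitPts.1 hy
  exact apply_iterate_ne_of_periodic hk hk' hfj r

lemma movedPts_piecewise_orbitPts (hper : ∃ k, 0 < k ∧ f^[k] j = j) (hfj : f j ≠ j) :
    movedPts ((orbitPts f j).piecewise f id) = orbitPts f j := by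
  ext y
  rw [mem_movedPts]
  by_cases hy : y ∈ orbitPts f j
  · simpa [piecewise_eq_of_mem _ _ _ hy, hy] using apply_ne_of_mem_orbitPts hper hfj hy
  · simp [hy]

lemma isCycleThrough_piecewise_orbitPts (hf : IsAdmissible E I f)
    (hper : ∃ k, 0 < k ∧ f^[k] j = j) (hfj : f j ≠ j) (hO : orbitPts f j ⊆ I) :
    IsCycleThrough E I j ((orbitPts f j).piecewise f id) := by
  have hmoved := movedPts_piecewise_orbitPts hper hfj
  have hEq : Set.EqOn f ((orbitPts f j).piecewise f id) (orbitPts f j) :=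
    (piecewise_eqOn _ f id).symm
  refine ⟨?_, hmoved.trans (orbitPts_eq_of_eqOn hEq), fun y hy => ?_, hmoved.le.trans hO⟩
  · obtain ⟨k, hk, hk'⟩ := hper
    exact ⟨k, hk, (iterate_eq_of_eqOn hEq fun r _ => iterate_mem_orbitPts r).symm.trans hk'⟩
  · have hyO : y ∈ orbitPts f j := hmoved ▸ mem_movedPts.2 hy
    rw [piecewise_eq_of_mem _ _ _ hyO] at hy ⊢
    exact (hf.2 y (hO hyO)).resolve_left hy

lemma isAdmissible_piecewise_id (hf : IsAdmissible E I f) (S : Finset (Fin n)) :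
    IsAdmissible E (I \ S) (S.piecewise id f) := by
  classical
  unfold IsAdmissible at *
  constructor <;> intro i hi <;> by_cases hiS : i ∈ S <;>
    simp_all [piecewise_eq_of_mem, piecewise_eq_of_notMem]

lemma isAcyclicOn_piecewise_id (hac : IsAcyclicOn (I.erase j) f) {S : Finset (Fin n)}
    (hjS : j ∈ S) : IsAcyclicOn (I \ S) (S.piecewise id f) :=
  (hac.mono fun _ hi => mem_erase.2 ⟨fun h => (mem_sdiff.1 hi).2 (h ▸ hjS), (mem_sdiff.1 hi).1⟩)
    |>.congr fun _ hi => (piecewise_eq_of_notMem _ _ _ (mem_sdiff.1 hi).2).symm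

end CycleDecomposition

namespace IsCycleThrough

open Finset Function

variable {n : ℕ} {E : Fin n → Fin n → Prop} {I : Finset (Fin n)} {g h : Fin n → Fin n}
  {j : Fin n} (hc : IsCycleThrough E I j h)
include hc

lemma mapsTo_piecewise : Set.MapsTo ((movedPts h).piecewise h g) (movedPts h) (movedPts h) :=
  fun i hi => by simpa only [piecewise_eq_of_mem _ _ _ hi] using hc.mapsTo hi

lemma iterate_piecewise (r : ℕ) : ((movedPts h).piecewise h g)^[r] j = h^[r] j :=
  (iterate_eq_of_eqOn (piecewise_eqOn _ h g).symm fun s _ => hc.iterate_mem_movedPts s).symm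

lemma orbitPts_piecewise : orbitPts ((movedPts h).piecewise h g) j = movedPts h := by
  rw [hc.movedPts_eq]
  exact (orbitPts_eq_of_eqOn (hc.movedPts_eq ▸ (piecewise_eqOn _ h g).symm)).symm

lemma isAdmissible_piecewise (hg : IsAdmissible E (I \ movedPts h) g) :
    IsAdmissible E I ((movedPts h).piecewise h g) := by
  refine ⟨fun i hi => ?_, fun i hi => ?_⟩ <;> by_cases him : i ∈ movedPts h
  · exact absurd (hc.movedPts_subset him) hi
  · rw [piecewise_eq_of_notMem _ _ _ him]
    exact hg.1 i fun h => hi (mem_sdiff.1 h).1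
  · rw [piecewise_eq_of_mem _ _ _ him]
    exact .inr (hc.edge i (mem_movedPts.1 him))
  · rw [piecewise_eq_of_notMem _ _ _ him]
    exact hg.2 i (mem_sdiff.2 ⟨hi, him⟩)

lemma not_isAcyclicOn_piecewise (hj : j ∈ I) : ¬ IsAcyclicOn I ((movedPts h).piecewise h g) := by
  intro hac
  obtain ⟨m, hm, hper⟩ := hc.periodic
  have := hac j hj m hm
    (fun r _ => hc.iterate_piecewise r ▸ hc.movedPts_subset (hc.iterate_mem_movedPts r))
    (hc.iterate_piecewise m ▸ hper)
  rw [piecewise_eq_of_mem _ _ _ hc.mem_movedPts_self] at this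
  exact mem_movedPts.1 hc.mem_movedPts_self this

lemma isAcyclicOn_erase_piecewise (hg : IsAcyclicOn (I \ movedPts h) g) :
    IsAcyclicOn (I.erase j) ((movedPts h).piecewise h g) := by
  set φ := (movedPts h).piecewise h g
  intro i hi k hk hwin hper
  by_cases him : i ∈ movedPts h
  · -- the cycle of `h` through `i` passes through `j`
    exfalso
    obtain ⟨s, hs⟩ := hc.exists_iterate_eq him
    have hiter (t : ℕ) : h^[t] i = φ^[t] i :=
      iterate_eq_of_eqOn (piecewise_eqOn _ h g).symm fun r _ => hc.mapsTo.iterate r him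
    have hper' : h^[k] i = i := (hiter k).trans hper
    have := hwin (s % k) (Nat.mod_lt s hk)
    rw [← hiter, IsPeriodicPt.iterate_mod_apply hper', hs] at this
    exact (mem_erase.1 this).1 rfl
  · -- otherwise the cycle through `i` never enters the cycle of `h`, so it is a cycle of `g`
    have hout : ∀ r < k, φ^[r] i ∉ movedPts h := by
      intro r hr hr'
      have := (hc.mapsTo_piecewise (g := g)).iterate (k - r) hr'
      rw [← iterate_add_apply, Nat.sub_add_cancel hr.le, hper] at this
      exact him this
    exact (hg.congr fun x hx => (piecewise_eq_of_notMem _ _ _ (mem_sdiff.1 hx).2).symm) i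
      (mem_sdiff.2 ⟨mem_of_mem_erase hi, him⟩) k hk
      (fun r hr => mem_sdiff.2 ⟨mem_of_mem_erase (hwin r hr), hout r hr⟩) hper

lemma piecewise_orbitPts_piecewise :
    (orbitPts ((movedPts h).piecewise h g) j).piecewise ((movedPts h).piecewise h g) id = h := by
  rw [hc.orbitPts_piecewise, piecewise_idem_left]
  funext i
  by_cases him : i ∈ movedPts h
  · exact piecewise_eq_of_mem _ _ _ him
  · rw [piecewise_eq_of_notMem _ _ _ him]
    exact (not_not.1 (mt mem_movedPts.2 him)).symm

lemma piecewise_id_orbitPts_piecewise (hg : IsAdmissible E (I \ movedPts h) g) :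
    (orbitPts ((movedPts h).piecewise h g) j).piecewise id ((movedPts h).piecewise h g) = g := by
  rw [hc.orbitPts_piecewise, piecewise_idem_right]
  funext i
  by_cases him : i ∈ movedPts h
  · exact (piecewise_eq_of_mem _ _ _ him).trans (hg.1 i fun hi => (mem_sdiff.1 hi).2 him).symm
  · exact piecewise_eq_of_notMem _ _ _ him

lemma weight_piecewise :
    weight I ((movedPts h).piecewise h g) =
      (∏ i ∈ movedPts h, X (Sum.inr i)) * weight (I \ movedPts h) g := by
  rw [weight_eq_mul_sdiff hc.movedPts_subset,
    weight_congr (g := g) fun i hi => piecewise_eq_of_notMem _ _ _ (mem_sdiff.1 hi).2]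
  congr 1
  rw [← hc.prod_comp]
  refine prod_congr rfl fun i hi => ?_
  rw [piecewise_eq_of_mem _ _ _ hi, if_neg (mem_movedPts.1 hi)]

end IsCycleThrough

section ExchangeRelation

open Finset Function

variable {n : ℕ} {E : Fin n → Fin n → Prop} {I : Finset (Fin n)} {f : Fin n → Fin n} {j : Fin n}

lemma piecewise_movedPts_piecewise_orbitPts (hper : ∃ k, 0 < k ∧ f^[k] j = j) (hfj : f j ≠ j) :
    (movedPts ((orbitPts f j).piecewise f id)).piecewise ((orbitPts f j).piecewise f id)
      ((orbitPts f j).piecewise id f) = f := by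
  rw [movedPts_piecewise_orbitPts hper hfj, piecewise_idem_left, piecewise_idem_right,
    piecewise_same]

open Classical in
variable (E I j) in
noncomputable def cycleSet : Finset (Fin n → Fin n) := univ.filter (IsCycleThrough E I j)

lemma mem_cycleSet {h : Fin n → Fin n} : h ∈ cycleSet E I j ↔ IsCycleThrough E I j h := by
  simp [cycleSet]

open Classical in
/-- An admissible function which is acyclic off `j` but not on `I` splits into its cycle
through `j` and an acyclic function on the rest. -/
lemma sum_weight_not_isAcyclicOn (hj : j ∈ I) :
    ∑ f ∈ univ.filter (fun f => IsAdmissible E I f ∧ IsAcyclicOn (I.erase j) f ∧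
        ¬ IsAcyclicOn I f), weight I f =
      ∑ h ∈ cycleSet E I j, (∏ i ∈ movedPts h, X (Sum.inr i)) * Ynum E (I \ movedPts h) := by
  simp only [Ynum_eq_sum, mul_sum]
  rw [sum_sigma']
  refine sum_nbij' (fun f => ⟨(orbitPts f j).piecewise f id, (orbitPts f j).piecewise id f⟩)
    (fun p => (movedPts p.1).piecewise p.1 p.2) ?_ ?_ ?_ ?_ ?_ <;>
    simp only [mem_sigma, mem_filter, mem_univ, true_and, mem_cycleSet]
  · rintro f ⟨hf, hac, hnac⟩
    obtain ⟨hper, hfj, hO⟩ := exists_periodic_of_not_isAcyclicOn hac hnac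
    rw [movedPts_piecewise_orbitPts hper hfj]
    exact ⟨isCycleThrough_piecewise_orbitPts hf hper hfj hO, isAdmissible_piecewise_id hf _,
      isAcyclicOn_piecewise_id hac (iterate_mem_orbitPts 0)⟩
  · rintro ⟨h, g⟩ ⟨hc, hg, hgac⟩
    exact ⟨hc.isAdmissible_piecewise hg, hc.isAcyclicOn_erase_piecewise hgac,
      hc.not_isAcyclicOn_piecewise hj⟩
  · rintro f ⟨-, hac, hnac⟩
    obtain ⟨hper, hfj, -⟩ := exists_periodic_of_not_isAcyclicOn hac hnac
    exact piecewise_movedPts_piecewise_orbitPts hper hfj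
  · rintro ⟨h, g⟩ ⟨hc, hg, -⟩
    rw [hc.piecewise_orbitPts_piecewise, hc.piecewise_id_orbitPts_piecewise hg]
  · rintro f ⟨hf, hac, hnac⟩
    obtain ⟨hper, hfj, hO⟩ := exists_periodic_of_not_isAcyclicOn hac hnac
    rw [← (isCycleThrough_piecewise_orbitPts hf hper hfj hO).weight_piecewise,
      piecewise_movedPts_piecewise_orbitPts hper hfj]

open Classical in
lemma Ynum_singleton_mul_Ynum_erase_eq (hj : j ∈ I) :
    Ynum E {j} * Ynum E (I.erase j) =
      Ynum E I +
        ∑ h ∈ cycleSet E I j, (∏ i ∈ movedPts h, X (Sum.inr i)) * Ynum E (I \ movedPts h) := by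
  rw [Ynum_singleton_mul_Ynum_erase hj, ← sum_filter_add_sum_filter_not _ (IsAcyclicOn I),
    filter_filter, filter_filter, ← sum_weight_not_isAcyclicOn hj, Ynum_eq_sum]
  congr 2
  · exact filter_congr fun f _ => ⟨fun ⟨⟨hf, _⟩, hac⟩ => ⟨hf, hac⟩,
      fun ⟨hf, hac⟩ => ⟨⟨hf, hac.mono (erase_subset j I)⟩, hac⟩⟩
  · exact filter_congr fun f _ => and_assoc

end ExchangeRelation

section LaurentPolynomials

open Finset Function

variable {n : ℕ} {E : Fin n → Fin n → Prop} {I : Finset (Fin n)} {j : Fin n}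

lemma prod_XX_ne_zero (J : Finset (Fin n)) : ∏ i ∈ J, (XX i : Kn n) ≠ 0 :=
  prod_ne_zero_iff.2 fun _ _ => (map_ne_zero_iff _ (IsFractionRing.injective _ _)).2 (X_ne_zero _)

open Classical in
/-- Only the identity survives setting all `A_i = 1` and all `X_i = 0`. -/
lemma eval_Ynum : eval (Sum.elim 1 0) (Ynum E I) = 1 := by
  rw [Ynum_eq_sum, map_sum,
    sum_eq_single_of_mem id (mem_filter.2 ⟨mem_univ _, isAdmissible_id, isAcyclicOn_id⟩)]
  · simp [weight]
  · rintro f hf hfid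
    obtain ⟨i, hi⟩ := ne_iff.1 hfid
    have hiI : i ∈ I := by_contra fun hiI => hi ((mem_filter.1 hf).2.1.1 i hiI)
    simp only [weight, map_prod]
    exact prod_eq_zero hiI (by simp [show f i ≠ i from hi])

lemma YY_ne_zero : YY E I ≠ 0 := by
  refine div_ne_zero ((map_ne_zero_iff _ (IsFractionRing.injective _ _)).2 fun h => ?_)
    (prod_XX_ne_zero I)
  simpa [h] using (eval_Ynum (E := E) (I := I))

open Classical in
lemma YY_empty : YY E ∅ = 1 := by
  have : Ynum E ∅ = 1 := by
    rw [Ynum_eq_sum,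
      sum_eq_single_of_mem id (mem_filter.2 ⟨mem_univ _, isAdmissible_id, isAcyclicOn_id⟩)]
    · exact prod_empty
    · rintro f hf hfid
      obtain ⟨i, hi⟩ := ne_iff.1 hfid
      exact absurd ((mem_filter.1 hf).2.1.1 i (notMem_empty i)) hi
  rw [YY, this, map_one, prod_empty, div_one]

lemma YY_singleton_mul_YY_erase (hj : j ∈ I) :
    YY E {j} * YY E (I.erase j) = YY E I + ∑ h ∈ cycleSet E I j, YY E (I \ movedPts h) := by
  simp only [YY]
  rw [div_mul_div_comm, ← map_mul, Ynum_singleton_mul_Ynum_erase_eq hj, map_add, map_sum, add_div,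
    sum_div, prod_singleton, mul_prod_erase I XX hj, add_right_inj]
  refine sum_congr rfl fun h hh => ?_
  rw [map_mul, map_prod, ← prod_sdiff (mem_cycleSet.1 hh).movedPts_subset,
    mul_comm (∏ i ∈ _ \ _, _)]
  exact mul_div_mul_left _ _ (prod_XX_ne_zero _)

end LaurentPolynomials

section Generation

open Finset

variable {n : ℕ} {E : Fin n → Fin n → Prop}

lemma YY_mem_of_forall_YY_singleton_mem (K : Subring (Kn n)) (I : Finset (Fin n))
    (hK : ∀ i ∈ I, YY E {i} ∈ K) : YY E I ∈ K := by
  induction I using Finset.strongInduction with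
  | H I ih =>
  rcases I.eq_empty_or_nonempty with rfl | ⟨j, hj⟩
  · exact YY_empty (E := E) ▸ K.one_mem
  have hsub {J : Finset (Fin n)} (hJ : J ⊂ I) : YY E J ∈ K :=
    ih J hJ fun i hi => hK i (hJ.subset hi)
  rw [← add_sub_cancel_right (YY E I) (∑ h ∈ cycleSet E I j, YY E (I \ movedPts h)),
    ← YY_singleton_mul_YY_erase hj]
  refine K.sub_mem (K.mul_mem (hK j hj) (hsub (erase_ssubset hj))) (K.sum_mem fun h hh => ?_)
  have hc := mem_cycleSet.1 hh
  exact hsub (sdiff_ssubset hc.movedPts_subset ⟨j, hc.mem_movedPts_self⟩)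

lemma MaximalNested.YY_singleton_mem_closure {𝒮 : Finset (Finset (Fin n))}
    (h𝒮 : MaximalNested E 𝒮) {T : Finset (Fin n)} (hT : T ∈ 𝒮) {i : Fin n} (hi : i ∈ T) :
    YY E {i} ∈ Subfield.closure {y : Kn n | ∃ T ∈ 𝒮, y = YY E T} := by
  set K := Subfield.closure {y : Kn n | ∃ T ∈ 𝒮, y = YY E T}
  induction T using Finset.strongInduction generalizing i with
  | H T ih =>
  obtain ⟨j, hjT, hcov⟩ := h𝒮.exists_pivot hT
  have hK : ∀ i ∈ T.erase j, YY E {i} ∈ K := fun i hi => by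
    obtain ⟨M, hM, hMT, hiM⟩ := hcov i (mem_of_mem_erase hi) (ne_of_mem_erase hi)
    exact ih M hMT hM hiM
  rcases eq_or_ne i j with rfl | hij
  · -- the exchange relation at the pivot solves for `Y_i`
    have hY : YY E {i} =
        (YY E T + ∑ h ∈ cycleSet E T i, YY E (T \ movedPts h)) / YY E (T.erase i) := by
      rw [eq_div_iff YY_ne_zero, YY_singleton_mul_YY_erase hjT]
    rw [hY]
    refine K.div_mem (K.add_mem (Subfield.subset_closure ⟨T, hT, rfl⟩) (K.sum_mem fun h hh => ?_))
      (YY_mem_of_forall_YY_singleton_mem K.toSubring _ hK)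
    refine YY_mem_of_forall_YY_singleton_mem K.toSubring _ fun v hv => hK v ?_
    exact mem_erase.2 ⟨fun hvi => (mem_sdiff.1 hv).2 (hvi ▸ (mem_cycleSet.1 hh).mem_movedPts_self),
      (mem_sdiff.1 hv).1⟩
  · exact hK i (mem_erase.2 ⟨hij, hi⟩)

end Generation

theorem stmt14_general (n : ℕ) (E : Fin n → Fin n → Prop)
    (𝒮 : Finset (Finset (Fin n))) (h𝒮 : MaximalNested E 𝒮)
    (I : Finset (Fin n)) (hIS : I ⊆ nsupport 𝒮) :
    YY E I ∈ Subfield.closure {y : Kn n | ∃ T ∈ 𝒮, y = YY E T} := by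
  refine YY_mem_of_forall_YY_singleton_mem (Subfield.closure _).toSubring I fun i hi => ?_
  obtain ⟨T, hT, hiT⟩ := Finset.mem_sup.1 (hIS hi)
  exact h𝒮.YY_singleton_mem_closure hT hiT

/-- If `𝒮` is a maximal nested collection with support `S`, then every `Y_I` with
`∅ ≠ I ⊆ S` is a rational function with integer coefficients of the `Y_T`, `T ∈ 𝒮`:
it lies in the subfield of the ambient field generated by `{Y_T : T ∈ 𝒮}`
(the fraction field of `ℤ[Y_T : T ∈ 𝒮]`). -/
theorem stmt14 (n : ℕ) (E : Fin n → Fin n → Prop) (hE : ∀ i, ¬ E i i)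
    (𝒮 : Finset (Finset (Fin n))) (h𝒮 : MaximalNested E 𝒮)
    (I : Finset (Fin n)) (hI : I.Nonempty) (hIS : I ⊆ nsupport 𝒮) :
    YY E I ∈ Subfield.closure {y : Kn n | ∃ T ∈ 𝒮, y = YY E T} :=
  stmt14_general n E 𝒮 h𝒮 I hIS
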